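/- Let 0 < α ≤ 1 and γ ≥ α. Let q_t(x,y) (t > 0, x, y ∈ ℝⁿ) be a measurable family such that for every N > 0 there is a constant C_N with |q_t(x,y)| ≤ C_N (1 + t/ρ(x) + t/ρ(y))^{−N} t^{−n} (1 + |x−y|/t)^{−(n+γ)}. Let g be supported in a ball B(x₀,r) with r ≤ ρ(x₀) and ‖g‖_∞ ≤ |B(x₀,r)|^{−(n+α)/n}, and suppose moreover that ∫ g = 0 whenever r < ρ(x₀)/4. Then there exists a constant C (depending on n, γ, α, x₀, r, the kernel constants, q and the reverse Hölder constant of V) such that sup_{t>0} |∫_{ℝⁿ} q_t(x,y) g(y) dy| ≤ C (1 + |x|)^{−(n+γ)} for all x ∈ ℝⁿ. -/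

import Mathlib

open MeasureTheory Metric Set

/-- The set whose supremum defines the critical radii function. -/
noncomputable def rhoSet (n : ℕ) (V : EuclideanSpace ℝ (Fin n) → ℝ)
    (x : EuclideanSpace ℝ (Fin n)) : Set ℝ :=
  {r : ℝ | 0 < r ∧ r ^ ((2 : ℝ) - n) * ∫ y in ball x r, V y ≤ 1}

/-- The critical radii function `ρ` of Shen associated to the potential `V`. -/
noncomputable def rho (n : ℕ) (V : EuclideanSpace ℝ (Fin n) → ℝ)
    (x : EuclideanSpace ℝ (Fin n)) : ℝ :=
  sSup (rhoSet n V x)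

open Module

/-!
On `B(x₀, r)` the critical radius is bounded between positive constants. From below by Hölder's
inequality, because `2 - n/q > 0`; from above because Hölder's inequality on a ball `B(y, s)`
carrying mass of `V`, combined with the reverse Hölder inequality on `B(y, R)`, gives
`R ^ (2 - n/q) * ∫_{B(y,s)} V ≲ 1` for every `R` in the set whose supremum is `ρ(y)`.

Integrating the kernel bound against `|g| ≤ G` gives a bound uniform in `x` and `t`, since the
profile `t ^ (-n) * (1 + |x - y|/t) ^ (-(n+γ))` is a rescaled integrable function. For large `|x|`,
`|x - y| ≥ (1 + |x|)/2` on the support of `g`, and since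
`t ^ (-n) * (1 + d/t) ^ (-(n+γ)) = t ^ γ * (t + d) ^ (-(n+γ))`, the factor `(1 + t/ρ(y)) ^ (-γ)`
absorbs `t ^ γ` at the price of `ρ(y) ^ γ`, leaving the decay `d ^ (-(n+γ))`.
-/

section Holder

variable {α : Type*} [MeasurableSpace α] {μ : Measure α} {s : Set α} {q : ℝ} {f : α → ℝ}

lemma memLp_ofReal_of_integrable_rpow (hq : 0 < q) (hf0 : 0 ≤ f)
    (hf : AEStronglyMeasurable f μ) (hfq : Integrable (fun x => f x ^ q) μ) :
    MemLp f (ENNReal.ofReal q) μ := by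
  rw [← integrable_norm_rpow_iff hf (by simpa using hq) ENNReal.ofReal_ne_top,
    ENNReal.toReal_ofReal hq.le]
  simpa only [Real.norm_of_nonneg (hf0 _)] using hfq

lemma integrableOn_of_integrableOn_rpow (hq : 1 ≤ q) (hf0 : 0 ≤ f) (hf : Measurable f)
    (hs : μ s ≠ ⊤) (hfq : IntegrableOn (fun x => f x ^ q) s μ) : IntegrableOn f s μ :=
  have := isFiniteMeasure_restrict.2 hs
  (memLp_ofReal_of_integrable_rpow (by linarith) hf0 hf.aestronglyMeasurable hfq).integrable
    (by simpa using hq)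

lemma setIntegral_le_setIntegral_rpow_rpow_mul (hq : 1 < q) (hf0 : 0 ≤ f) (hf : Measurable f)
    (hs : μ s ≠ ⊤) (hfq : IntegrableOn (fun x => f x ^ q) s μ) :
    ∫ x in s, f x ∂μ ≤ (∫ x in s, f x ^ q ∂μ) ^ (1 / q) * (μ s).toReal ^ (1 - 1 / q) := by
  have := isFiniteMeasure_restrict.2 hs
  have holder := integral_mul_le_Lp_mul_Lq_of_nonneg (Real.HolderConjugate.conjExponent hq)
    (Filter.Eventually.of_forall hf0) (Filter.Eventually.of_forall fun _ => zero_le_one)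
    (memLp_ofReal_of_integrable_rpow (by linarith) hf0 hf.aestronglyMeasurable hfq)
    (memLp_const (1 : ℝ))
  have hexp : (q.conjExponent)⁻¹ = 1 - q⁻¹ := by
    rw [Real.conjExponent]; field_simp
  simpa [hexp, Measure.real] using holder

end Holder

section Kernel

variable {F : Type*} [NormedAddCommGroup F] [NormedSpace ℝ F] [FiniteDimensional ℝ F]
  [MeasurableSpace F] [BorelSpace F] (μ : Measure F) [μ.IsAddHaarMeasure]

lemma integral_rpow_neg_finrank_mul_comp_smul_sub (f : F → ℝ) (x : F) {t : ℝ} (ht : 0 < t) :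
    ∫ y, t ^ (-(finrank ℝ F : ℝ)) * f (t⁻¹ • (y - x)) ∂μ = ∫ y, f y ∂μ := by
  rw [integral_const_mul, integral_sub_right_eq_self (fun z => f (t⁻¹ • z)) x,
    Measure.integral_comp_inv_smul_of_nonneg μ f ht.le, smul_eq_mul, ← mul_assoc,
    Real.rpow_neg ht.le, Real.rpow_natCast, inv_mul_cancel₀ (by positivity), one_mul]

lemma abs_integral_mul_le_of_abs_le_profile {K g : F → ℝ} {x : F} {t s C G : ℝ} (ht : 0 < t)
    (hs : (finrank ℝ F : ℝ) < s)
    (hK : ∀ y, |K y| ≤ C * t ^ (-(finrank ℝ F : ℝ)) * (1 + dist x y / t) ^ (-s))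
    (hg : ∀ y, |g y| ≤ G) :
    |∫ y, K y * g y ∂μ| ≤ C * G * ∫ u, (1 + ‖u‖) ^ (-s) ∂μ := by
  set φ : F → ℝ := fun u => (1 + ‖u‖) ^ (-s)
  have hprofile : ∀ y, (1 + dist x y / t) ^ (-s) = φ (t⁻¹ • (y - x)) := fun y => by
    simp only [φ, norm_smul, Real.norm_of_nonneg (inv_nonneg.2 ht.le), ← dist_eq_norm,
      dist_comm y, div_eq_inv_mul]
  have hφ : Integrable φ μ := integrable_one_add_norm hs
  have hmajorant : Integrable (fun y => C * G * (t ^ (-(finrank ℝ F : ℝ)) * φ (t⁻¹ • (y - x)))) μ :=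
    (((hφ.comp_smul (inv_ne_zero ht.ne')).comp_sub_right x).const_mul _).const_mul _
  have hle : ∀ y, ‖K y * g y‖ ≤ C * G * (t ^ (-(finrank ℝ F : ℝ)) * φ (t⁻¹ • (y - x))) := by
    intro y
    rw [norm_mul, Real.norm_eq_abs, Real.norm_eq_abs, ← hprofile]
    calc |K y| * |g y| ≤ (C * t ^ (-(finrank ℝ F : ℝ)) * (1 + dist x y / t) ^ (-s)) * G :=
          mul_le_mul (hK y) (hg y) (abs_nonneg _) ((abs_nonneg _).trans (hK y))
      _ = _ := by ring
  calc |∫ y, K y * g y ∂μ| ≤ ∫ y, C * G * (t ^ (-(finrank ℝ F : ℝ)) * φ (t⁻¹ • (y - x))) ∂μ :=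
        norm_integral_le_of_norm_le hmajorant (Filter.Eventually.of_forall hle)
    _ = C * G * ∫ u, φ u ∂μ := by
        rw [integral_const_mul, integral_rpow_neg_finrank_mul_comp_smul_sub μ φ x ht]

end Kernel

lemma abs_integral_mul_le_of_support_subset {α : Type*} [MeasurableSpace α] {μ : Measure α}
    {K g : α → ℝ} {s : Set α} {D G : ℝ} (hs : μ s < ⊤) (hgs : Function.support g ⊆ s)
    (hK : ∀ y ∈ s, |K y| ≤ D) (hg : ∀ y, |g y| ≤ G) :
    |∫ y, K y * g y ∂μ| ≤ D * G * μ.real s := by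
  have hout : ∀ y ∉ s, K y * g y = 0 := fun y hy => by
    rw [Function.notMem_support.1 fun h => hy (hgs h), mul_zero]
  rw [← setIntegral_eq_integral_of_forall_compl_eq_zero hout, ← Real.norm_eq_abs]
  refine norm_setIntegral_le_of_norm_le_const hs fun y hy => ?_
  rw [norm_mul, Real.norm_eq_abs, Real.norm_eq_abs]
  exact mul_le_mul (hK y hy) (hg y) (abs_nonneg _) ((abs_nonneg _).trans (hK y hy))

lemma weight_mul_profile_le {t ρ ρ' d a γ : ℝ} (ht : 0 < t) (hρ : 0 < ρ) (hρ' : 0 ≤ ρ')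
    (hd : 0 < d) (ha : 0 ≤ a) (hγ : 0 ≤ γ) :
    (1 + t / ρ' + t / ρ) ^ (-γ) * t ^ (-a) * (1 + d / t) ^ (-(a + γ)) ≤ ρ ^ γ * d ^ (-(a + γ)) := by
  have hw : 0 < 1 + t / ρ' + t / ρ := by positivity
  have hprofile : t ^ (-a) * (1 + d / t) ^ (-(a + γ)) = t ^ γ * (t + d) ^ (-(a + γ)) := by
    rw [show 1 + d / t = (t + d) / t by field_simp, Real.div_rpow (by positivity) ht.le,
      Real.rpow_neg ht.le (a + γ), div_inv_eq_mul, mul_left_comm, ← Real.rpow_add ht,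
      neg_add_cancel_left, mul_comm]
  have htime : (1 + t / ρ' + t / ρ) ^ (-γ) * t ^ γ ≤ ρ ^ γ := by
    rw [Real.rpow_neg hw.le, inv_mul_eq_div, ← Real.div_rpow ht.le hw.le]
    refine Real.rpow_le_rpow (by positivity) ?_ hγ
    rw [div_le_iff₀ hw]
    have : 0 ≤ ρ * (t / ρ') := by positivity
    have : ρ * (t / ρ) = t := by field_simp
    nlinarith
  have hspace : (t + d) ^ (-(a + γ)) ≤ d ^ (-(a + γ)) :=
    Real.rpow_le_rpow_of_nonpos hd (by linarith) (by linarith)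
  calc _ = ((1 + t / ρ' + t / ρ) ^ (-γ) * t ^ γ) * (t + d) ^ (-(a + γ)) := by
        rw [mul_assoc, hprofile, mul_assoc]
    _ ≤ ρ ^ γ * d ^ (-(a + γ)) := by gcongr

lemma weight_rpow_neg_le_one {t ρ ρ' γ : ℝ} (ht : 0 ≤ t) (hρ : 0 ≤ ρ) (hρ' : 0 ≤ ρ')
    (hγ : 0 ≤ γ) : (1 + t / ρ' + t / ρ) ^ (-γ) ≤ 1 := by
  have : 0 ≤ t / ρ' := div_nonneg ht hρ'
  have : 0 ≤ t / ρ := div_nonneg ht hρ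
  exact Real.rpow_le_one_of_one_le_of_nonpos (by linarith) (by linarith)

lemma one_add_norm_div_two_le_dist {F : Type*} [SeminormedAddCommGroup F] {x x₀ y : F} {r : ℝ}
    (hy : y ∈ ball x₀ r) (hx : 2 * ‖x₀‖ + 2 * r + 1 ≤ ‖x‖) : (1 + ‖x‖) / 2 ≤ dist x y := by
  have h1 := norm_sub_norm_le x y
  have h2 := norm_le_norm_add_norm_sub' y x₀
  rw [mem_ball, dist_eq_norm] at hy
  rw [dist_eq_norm]
  linarith

lemma weight_mul_profile_le_of_far {F : Type*} [SeminormedAddCommGroup F] {x x₀ y : F}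
    {r t ρ ρ' M a γ : ℝ} (ht : 0 < t) (hρ : 0 < ρ) (hρM : ρ ≤ M) (hρ' : 0 ≤ ρ') (ha : 0 ≤ a)
    (hγ : 0 ≤ γ) (hy : y ∈ ball x₀ r) (hx : 2 * ‖x₀‖ + 2 * r + 1 ≤ ‖x‖) :
    (1 + t / ρ' + t / ρ) ^ (-γ) * t ^ (-a) * (1 + dist x y / t) ^ (-(a + γ)) ≤
      M ^ γ * (2 ^ (a + γ) * (1 + ‖x‖) ^ (-(a + γ))) := by
  have hd := one_add_norm_div_two_le_dist hy hx
  have hd0 : 0 < (1 + ‖x‖) / 2 := by positivity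
  calc _ ≤ ρ ^ γ * dist x y ^ (-(a + γ)) :=
        weight_mul_profile_le ht hρ hρ' (hd0.trans_le hd) ha hγ
    _ ≤ M ^ γ * ((1 + ‖x‖) / 2) ^ (-(a + γ)) :=
        mul_le_mul (Real.rpow_le_rpow hρ.le hρM hγ)
          (Real.rpow_le_rpow_of_nonpos hd0 hd (by linarith)) (by positivity)
          (Real.rpow_nonneg (hρ.le.trans hρM) _)
    _ = M ^ γ * (2 ^ (a + γ) * (1 + ‖x‖) ^ (-(a + γ))) := by
        rw [Real.div_rpow (by positivity) zero_le_two, Real.rpow_neg zero_le_two, div_inv_eq_mul,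
          mul_comm (_ ^ _) (2 ^ _)]

lemma le_mul_one_add_rpow_neg_of_le_of_far {a A B R u p : ℝ} (hR : 0 ≤ R) (hu : 0 ≤ u)
    (hp : 0 ≤ p) (hA : 0 ≤ A) (hB : 0 ≤ B) (hnear : a ≤ A) (hfar : R ≤ u → a ≤ B * (1 + u) ^ (-p)) :
    a ≤ (A * (1 + R) ^ p + B) * (1 + u) ^ (-p) := by
  have hw : 0 ≤ (1 + u) ^ (-p) := by positivity
  rcases le_or_gt R u with hRu | huR
  · refine (hfar hRu).trans (mul_le_mul_of_nonneg_right ?_ hw)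
    exact le_add_of_nonneg_left (mul_nonneg hA (by positivity))
  · have hdecay : (1 + R) ^ (-p) ≤ (1 + u) ^ (-p) :=
      Real.rpow_le_rpow_of_nonpos (by linarith) (by linarith) (by linarith)
    calc a ≤ A * ((1 + R) ^ p * (1 + R) ^ (-p)) := by
          rwa [← Real.rpow_add (by linarith), add_neg_cancel, Real.rpow_zero, mul_one]
      _ ≤ A * (1 + R) ^ p * (1 + u) ^ (-p) := by
          rw [← mul_assoc]; exact mul_le_mul_of_nonneg_left hdecay (mul_nonneg hA (by positivity))
      _ ≤ (A * (1 + R) ^ p + B) * (1 + u) ^ (-p) :=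
          mul_le_mul_of_nonneg_right (le_add_of_nonneg_right hB) hw

variable {n : ℕ}

local notation "E" => EuclideanSpace ℝ (Fin n)

lemma volume_ball_toReal (x : E) {s : ℝ} (hs : 0 < s) :
    (volume (ball x s)).toReal = s ^ n * (volume (ball (0 : E) 1)).toReal := by
  rw [Measure.addHaar_ball_of_pos volume x hs, ENNReal.toReal_mul,
    ENNReal.toReal_ofReal (by positivity), finrank_euclideanSpace_fin]

lemma rpow_two_sub_mul_volume_ball_rpow (x : E) {s : ℝ} (q : ℝ) (hs : 0 < s) :
    s ^ ((2 : ℝ) - n) * (volume (ball x s)).toReal ^ (1 - 1 / q) =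
      s ^ (2 - n / q) * (volume (ball (0 : E) 1)).toReal ^ (1 - 1 / q) := by
  rw [volume_ball_toReal x hs, Real.mul_rpow (by positivity) ENNReal.toReal_nonneg,
    ← Real.rpow_natCast, ← Real.rpow_mul hs.le, ← mul_assoc, ← Real.rpow_add hs]
  ring_nf

lemma rho_nonneg (V : E → ℝ) (x : E) : 0 ≤ rho n V x :=
  Real.sSup_nonneg fun _ hR => hR.1.le

lemma mul_rpow_one_sub_le_of_inv_mul_rpow_le {a b c C p : ℝ} (ha : 0 < a) (hb : 0 ≤ b)
    (h : (a⁻¹ * b) ^ p ≤ C * (a⁻¹ * c)) : b ^ p * a ^ (1 - p) ≤ C * c := by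
  rw [Real.mul_rpow (inv_nonneg.2 ha.le) hb, Real.inv_rpow ha.le] at h
  have hap : 0 < a ^ p := Real.rpow_pos_of_pos ha p
  have key : a ^ p * a ^ (1 - p) = a := by
    rw [← Real.rpow_add ha, add_sub_cancel, Real.rpow_one]
  calc b ^ p * a ^ (1 - p) = a ^ p * ((a ^ p)⁻¹ * b ^ p) * a ^ (1 - p) := by
        field_simp
    _ ≤ a ^ p * (C * (a⁻¹ * c)) * a ^ (1 - p) := by gcongr
    _ = C * c := by
        rw [mul_comm (a ^ p), mul_assoc, key]; field_simp

section Potential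

variable {q C_V : ℝ}

lemma exists_pos_setIntegral_ball {V : E → ℝ} (hq : 1 < q) (hV0 : ∀ x, 0 ≤ V x)
    (hVmeas : Measurable V)
    (hVloc : ∀ (x : E) (r : ℝ), 0 < r → IntegrableOn (fun y => V y ^ q) (ball x r))
    (hVne : ¬ (V =ᵐ[volume] (0 : E → ℝ))) (x : E) :
    ∃ s > 0, 0 < ∫ y in ball x s, V y := by
  by_contra! h
  refine hVne ?_
  have hball : ∀ k : ℕ, ∀ᵐ y ∂volume.restrict (ball x (k + 1)), V y = 0 := fun k => by
    have hk : (0 : ℝ) < k + 1 := by positivity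
    have hint := integrableOn_of_integrableOn_rpow hq.le hV0 hVmeas measure_ball_lt_top.ne
      (hVloc x _ hk)
    exact (integral_eq_zero_iff_of_nonneg (fun y => hV0 y) hint).1
      ((h _ hk).antisymm (setIntegral_nonneg measurableSet_ball fun y _ => hV0 y))
  have := (ae_restrict_iUnion_iff _ _).2 hball
  rwa [iUnion_ball_nat_succ, Measure.restrict_univ] at this

lemma exists_pos_mem_rhoSet {V : E → ℝ} (hq1 : 1 < q) (hq : (n : ℝ) / 2 < q) (hV0 : ∀ x, 0 ≤ V x)
    (hVmeas : Measurable V)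
    (hVloc : ∀ (x : E) (r : ℝ), 0 < r → IntegrableOn (fun y => V y ^ q) (ball x r)) (y : E) :
    ∃ m > 0, m ∈ rhoSet n V y := by
  have he : 0 < 2 - n / q := by
    rw [sub_pos, div_lt_iff₀ (by linarith)]; linarith
  set ω := (volume (ball (0 : E) 1)).toReal
  set K := (∫ z in ball y 1, V z ^ q) ^ (1 / q) * ω ^ (1 - 1 / q)
  have hK : 0 ≤ K := mul_nonneg (Real.rpow_nonneg (setIntegral_nonneg measurableSet_ball
    fun z _ => Real.rpow_nonneg (hV0 z) q) _) (Real.rpow_nonneg ENNReal.toReal_nonneg _)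
  set m := min 1 ((K + 1)⁻¹ ^ (2 - n / q)⁻¹)
  have hm0 : 0 < m := lt_min one_pos (by positivity)
  have hme : m ^ (2 - n / q) ≤ (K + 1)⁻¹ :=
    (Real.le_rpow_inv_iff_of_pos hm0.le (by positivity) he).1 (min_le_right _ _)
  refine ⟨m, hm0, hm0, ?_⟩
  have hVq0 : ∀ z, 0 ≤ V z ^ q := fun z => Real.rpow_nonneg (hV0 z) q
  calc m ^ ((2 : ℝ) - n) * ∫ z in ball y m, V z
      ≤ m ^ ((2 : ℝ) - n) * ((∫ z in ball y m, V z ^ q) ^ (1 / q) *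
          (volume (ball y m)).toReal ^ (1 - 1 / q)) := by
        gcongr
        exact setIntegral_le_setIntegral_rpow_rpow_mul hq1 hV0 hVmeas measure_ball_lt_top.ne
          (hVloc y m hm0)
    _ = (∫ z in ball y m, V z ^ q) ^ (1 / q) * (m ^ (2 - n / q) * ω ^ (1 - 1 / q)) := by
        rw [← rpow_two_sub_mul_volume_ball_rpow y q hm0]; ring
    _ ≤ (∫ z in ball y 1, V z ^ q) ^ (1 / q) * (m ^ (2 - n / q) * ω ^ (1 - 1 / q)) := by
        gcongr ?_ ^ _ * _
        · exact setIntegral_nonneg measurableSet_ball fun z _ => hVq0 z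
        · exact setIntegral_mono_set (hVloc y 1 one_pos) (Filter.Eventually.of_forall hVq0)
            (ball_subset_ball (min_le_left _ _)).eventuallyLE
    _ = K * m ^ (2 - n / q) := by ring
    _ ≤ K * (K + 1)⁻¹ := by gcongr
    _ ≤ 1 := by rw [mul_inv_le_iff₀ (by positivity)]; linarith

lemma mul_setIntegral_ball_le_of_mem_rhoSet {V : E → ℝ} (hq : 1 < q) (hV0 : ∀ x, 0 ≤ V x)
    (hVmeas : Measurable V)
    (hVloc : ∀ (x : E) (r : ℝ), 0 < r → IntegrableOn (fun y => V y ^ q) (ball x r))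
    (hCV : 0 ≤ C_V)
    (hRH : ∀ (x : E) (r : ℝ), 0 < r →
      (((volume (ball x r)).toReal)⁻¹ * ∫ y in ball x r, V y ^ q) ^ (1 / q)
        ≤ C_V * (((volume (ball x r)).toReal)⁻¹ * ∫ y in ball x r, V y))
    {y : E} {s R : ℝ} (hs : 0 < s) (hsR : s ≤ R) (hR : R ∈ rhoSet n V y) :
    R ^ ((2 : ℝ) - n) * (volume (ball y R)).toReal ^ (1 - 1 / q) * ∫ z in ball y s, V z ≤
      C_V * (volume (ball y s)).toReal ^ (1 - 1 / q) := by
  obtain ⟨hR0, hRV⟩ := hR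
  have hVq0 : ∀ z, 0 ≤ V z ^ q := fun z => Real.rpow_nonneg (hV0 z) q
  have hbR : 0 ≤ ∫ z in ball y R, V z ^ q := setIntegral_nonneg measurableSet_ball fun z _ => hVq0 z
  have hholder : ∫ z in ball y s, V z ≤
      (∫ z in ball y R, V z ^ q) ^ (1 / q) * (volume (ball y s)).toReal ^ (1 - 1 / q) := by
    refine (setIntegral_le_setIntegral_rpow_rpow_mul hq hV0 hVmeas measure_ball_lt_top.ne
      (hVloc y s hs)).trans ?_
    gcongr ?_ ^ _ * _
    · exact setIntegral_nonneg measurableSet_ball fun z _ => hVq0 z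
    · exact setIntegral_mono_set (hVloc y R hR0) (Filter.Eventually.of_forall hVq0)
        (ball_subset_ball hsR).eventuallyLE
  have hreverse := mul_rpow_one_sub_le_of_inv_mul_rpow_le
    (ENNReal.toReal_pos (measure_ball_pos volume y hR0).ne' measure_ball_lt_top.ne) hbR
    (hRH y R hR0)
  calc R ^ ((2 : ℝ) - n) * (volume (ball y R)).toReal ^ (1 - 1 / q) * ∫ z in ball y s, V z
      ≤ R ^ ((2 : ℝ) - n) * (volume (ball y R)).toReal ^ (1 - 1 / q) *
          ((∫ z in ball y R, V z ^ q) ^ (1 / q) * (volume (ball y s)).toReal ^ (1 - 1 / q)) := by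
        gcongr
    _ = ((∫ z in ball y R, V z ^ q) ^ (1 / q) * (volume (ball y R)).toReal ^ (1 - 1 / q)) *
          R ^ ((2 : ℝ) - n) * (volume (ball y s)).toReal ^ (1 - 1 / q) := by ring
    _ ≤ C_V * (∫ z in ball y R, V z) * R ^ ((2 : ℝ) - n) *
          (volume (ball y s)).toReal ^ (1 - 1 / q) := by gcongr
    _ = C_V * (R ^ ((2 : ℝ) - n) * ∫ z in ball y R, V z) *
          (volume (ball y s)).toReal ^ (1 - 1 / q) := by ring
    _ ≤ C_V * 1 * (volume (ball y s)).toReal ^ (1 - 1 / q) := by gcongr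
    _ = C_V * (volume (ball y s)).toReal ^ (1 - 1 / q) := by rw [mul_one]

lemma exists_forall_mem_rhoSet_le {V : E → ℝ} (hq1 : 1 < q) (hq : (n : ℝ) / 2 < q)
    (hV0 : ∀ x, 0 ≤ V x) (hVmeas : Measurable V)
    (hVloc : ∀ (x : E) (r : ℝ), 0 < r → IntegrableOn (fun y => V y ^ q) (ball x r))
    (hVne : ¬ (V =ᵐ[volume] (0 : E → ℝ))) (hCV : 0 ≤ C_V)
    (hRH : ∀ (x : E) (r : ℝ), 0 < r →
      (((volume (ball x r)).toReal)⁻¹ * ∫ y in ball x r, V y ^ q) ^ (1 / q)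
        ≤ C_V * (((volume (ball x r)).toReal)⁻¹ * ∫ y in ball x r, V y))
    (x₀ : E) (r : ℝ) :
    ∃ M > 0, ∀ y ∈ ball x₀ r, ∀ R ∈ rhoSet n V y, R ≤ M := by
  have he : 0 < 2 - n / q := by
    rw [sub_pos, div_lt_iff₀ (by linarith)]; linarith
  obtain ⟨s₀, hs₀, hc₀⟩ := exists_pos_setIntegral_ball hq1 hV0 hVmeas hVloc hVne x₀
  set s := s₀ + |r|
  have hs : 0 < s := by positivity
  set ω := (volume (ball (0 : E) 1)).toReal
  have hω : 0 < ω :=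
    ENNReal.toReal_pos (measure_ball_pos volume 0 one_pos).ne' measure_ball_lt_top.ne
  set K := C_V * (volume (ball (0 : E) s)).toReal ^ (1 - 1 / q) /
    ((∫ z in ball x₀ s₀, V z) * ω ^ (1 - 1 / q))
  refine ⟨max s (K ^ (2 - n / q)⁻¹), lt_max_of_lt_left hs, fun y hy R hR => ?_⟩
  rcases le_or_gt R s with hRs | hsR
  · exact hRs.trans (le_max_left _ _)
  have hmass : ∫ z in ball x₀ s₀, V z ≤ ∫ z in ball y s, V z := by
    refine setIntegral_mono_set (integrableOn_of_integrableOn_rpow hq1.le hV0 hVmeas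
      measure_ball_lt_top.ne (hVloc y s hs)) (Filter.Eventually.of_forall hV0)
      (ball_subset_ball' ?_).eventuallyLE
    have := mem_ball'.1 hy
    have := le_abs_self r
    linarith
  have key := mul_setIntegral_ball_le_of_mem_rhoSet hq1 hV0 hVmeas hVloc hCV hRH hs hsR.le hR
  rw [rpow_two_sub_mul_volume_ball_rpow y q hR.1, Measure.addHaar_ball_center volume y s] at key
  have hRK : R ^ (2 - n / q) ≤ K := by
    rw [le_div_iff₀ (by positivity)]
    calc R ^ (2 - n / q) * ((∫ z in ball x₀ s₀, V z) * ω ^ (1 - 1 / q))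
        ≤ R ^ (2 - n / q) * ω ^ (1 - 1 / q) * ∫ z in ball y s, V z := by
          rw [mul_comm (∫ z in ball x₀ s₀, V z), ← mul_assoc]
          exact mul_le_mul_of_nonneg_left hmass
            (mul_nonneg (Real.rpow_nonneg hR.1.le _) (Real.rpow_nonneg hω.le _))
      _ ≤ _ := key
  exact ((Real.le_rpow_inv_iff_of_pos hR.1.le ((Real.rpow_nonneg hR.1.le _).trans hRK) he).2
    hRK).trans (le_max_right _ _)

lemma exists_forall_mem_ball_rho_pos_le {V : E → ℝ} (hq1 : 1 < q) (hq : (n : ℝ) / 2 < q)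
    (hV0 : ∀ x, 0 ≤ V x) (hVmeas : Measurable V)
    (hVloc : ∀ (x : E) (r : ℝ), 0 < r → IntegrableOn (fun y => V y ^ q) (ball x r))
    (hVne : ¬ (V =ᵐ[volume] (0 : E → ℝ))) (hCV : 0 ≤ C_V)
    (hRH : ∀ (x : E) (r : ℝ), 0 < r →
      (((volume (ball x r)).toReal)⁻¹ * ∫ y in ball x r, V y ^ q) ^ (1 / q)
        ≤ C_V * (((volume (ball x r)).toReal)⁻¹ * ∫ y in ball x r, V y))
    (x₀ : E) (r : ℝ) :
    ∃ M > 0, ∀ y ∈ ball x₀ r, 0 < rho n V y ∧ rho n V y ≤ M := by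
  obtain ⟨M, hM0, hM⟩ :=
    exists_forall_mem_rhoSet_le hq1 hq hV0 hVmeas hVloc hVne hCV hRH x₀ r
  refine ⟨M, hM0, fun y hy => ?_⟩
  obtain ⟨m, hm0, hm⟩ := exists_pos_mem_rhoSet hq1 hq hV0 hVmeas hVloc y
  exact ⟨hm0.trans_le (le_csSup ⟨M, hM y hy⟩ hm), csSup_le ⟨m, hm⟩ (hM y hy)⟩

end Potential

section KernelBound

variable {t γ C G : ℝ}

lemma abs_integral_mul_le_of_kernel_bound {ρ K g : E → ℝ} {x : E} (hρ : ∀ z, 0 ≤ ρ z)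
    (ht : 0 < t) (hγ : 0 < γ) (hC : 0 ≤ C)
    (hK : ∀ y, |K y| ≤ C * (1 + t / ρ x + t / ρ y) ^ (-γ) * t ^ (-(n : ℝ)) *
      (1 + dist x y / t) ^ (-((n : ℝ) + γ)))
    (hg : ∀ y, |g y| ≤ G) :
    |∫ y, K y * g y| ≤ C * G * ∫ u : E, (1 + ‖u‖) ^ (-((n : ℝ) + γ)) := by
  refine abs_integral_mul_le_of_abs_le_profile volume (x := x) ht
    (by rw [finrank_euclideanSpace_fin]; linarith) (fun y => (hK y).trans ?_) hg
  have hw := weight_rpow_neg_le_one ht.le (hρ y) (hρ x) hγ.le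
  rw [finrank_euclideanSpace_fin]
  calc _ = C * (1 + t / ρ x + t / ρ y) ^ (-γ) * (t ^ (-(n : ℝ)) *
        (1 + dist x y / t) ^ (-((n : ℝ) + γ))) := by ring
    _ ≤ C * 1 * (t ^ (-(n : ℝ)) * (1 + dist x y / t) ^ (-((n : ℝ) + γ))) := by gcongr
    _ = _ := by ring

lemma abs_integral_mul_le_of_kernel_bound_of_far {ρ K g : E → ℝ} {x x₀ : E} {r M : ℝ}
    (hρ : ∀ z, 0 ≤ ρ z) (hρM : ∀ y ∈ ball x₀ r, 0 < ρ y ∧ ρ y ≤ M) (ht : 0 < t) (hγ : 0 ≤ γ)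
    (hC : 0 ≤ C)
    (hK : ∀ y, |K y| ≤ C * (1 + t / ρ x + t / ρ y) ^ (-γ) * t ^ (-(n : ℝ)) *
      (1 + dist x y / t) ^ (-((n : ℝ) + γ)))
    (hgs : Function.support g ⊆ ball x₀ r) (hg : ∀ y, |g y| ≤ G)
    (hx : 2 * ‖x₀‖ + 2 * r + 1 ≤ ‖x‖) :
    |∫ y, K y * g y| ≤ C * M ^ γ * 2 ^ ((n : ℝ) + γ) * G * (volume (ball x₀ r)).toReal *
      (1 + ‖x‖) ^ (-((n : ℝ) + γ)) := by
  refine (abs_integral_mul_le_of_support_subset measure_ball_lt_top hgs (fun y hy => (hK y).trans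
    (?_ : _ ≤ C * (M ^ γ * (2 ^ ((n : ℝ) + γ) * (1 + ‖x‖) ^ (-((n : ℝ) + γ)))))) hg).trans_eq
    (by rw [Measure.real]; ring)
  obtain ⟨hρy, hρyM⟩ := hρM y hy
  calc _ = C * ((1 + t / ρ x + t / ρ y) ^ (-γ) * t ^ (-(n : ℝ)) *
        (1 + dist x y / t) ^ (-((n : ℝ) + γ))) := by ring
    _ ≤ _ := mul_le_mul_of_nonneg_left
        (weight_mul_profile_le_of_far ht hρy hρyM (hρ x) n.cast_nonneg hγ hy hx) hC

end KernelBound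

theorem stmt_12 (n : ℕ) (hn : 3 ≤ n) (q : ℝ) (hq : (n : ℝ) / 2 < q)
    (V : EuclideanSpace ℝ (Fin n) → ℝ) (hV0 : ∀ x, 0 ≤ V x) (hVmeas : Measurable V)
    (hVloc : ∀ (x : EuclideanSpace ℝ (Fin n)) (r : ℝ), 0 < r →
      IntegrableOn (fun y => V y ^ q) (ball x r))
    (hVne : ¬ (V =ᵐ[volume] (0 : EuclideanSpace ℝ (Fin n) → ℝ)))
    (C_V : ℝ) (hCV : 0 < C_V)
    (hRH : ∀ (x : EuclideanSpace ℝ (Fin n)) (r : ℝ), 0 < r →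
      (((volume (ball x r)).toReal)⁻¹ * ∫ y in ball x r, V y ^ q) ^ (1 / q)
        ≤ C_V * (((volume (ball x r)).toReal)⁻¹ * ∫ y in ball x r, V y))
    (α γ : ℝ) (hα0 : 0 < α) (hγ : α ≤ γ)
    (Q : ℝ → EuclideanSpace ℝ (Fin n) → EuclideanSpace ℝ (Fin n) → ℝ)
    (hQ : ∀ N > (0 : ℝ), ∃ C_N > (0 : ℝ),
      ∀ (t : ℝ) (x y : EuclideanSpace ℝ (Fin n)), 0 < t →
        |Q t x y| ≤ C_N * (1 + t / rho n V x + t / rho n V y) ^ (-N) * t ^ (-(n : ℝ)) *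
          (1 + dist x y / t) ^ (-((n : ℝ) + γ)))
    (x₀ : EuclideanSpace ℝ (Fin n)) (r : ℝ) (hr : 0 < r)
    (g : EuclideanSpace ℝ (Fin n) → ℝ)
    (hgsupp : Function.support g ⊆ ball x₀ r)
    (hgbound : ∀ y, |g y| ≤ (volume (ball x₀ r)).toReal ^ (-((n : ℝ) + α) / n)) :
    ∃ C > (0 : ℝ), ∀ (x : EuclideanSpace ℝ (Fin n)) (t : ℝ), 0 < t →
      |∫ y, Q t x y * g y| ≤ C * (1 + ‖x‖) ^ (-((n : ℝ) + γ)) := by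
  have hq1 : 1 < q := by
    have : (3 : ℝ) ≤ n := by exact_mod_cast hn
    linarith
  have hγ0 : 0 < γ := hα0.trans_le hγ
  obtain ⟨M, hM0, hρM⟩ :=
    exists_forall_mem_ball_rho_pos_le hq1 hq hV0 hVmeas hVloc hVne hCV.le hRH x₀ r
  obtain ⟨C, hC, hQγ⟩ := hQ γ hγ0
  set G := (volume (ball x₀ r)).toReal ^ (-((n : ℝ) + α) / n)
  set A := C * G * ∫ u : EuclideanSpace ℝ (Fin n), (1 + ‖u‖) ^ (-((n : ℝ) + γ))
  set B := C * M ^ γ * 2 ^ ((n : ℝ) + γ) * G * (volume (ball x₀ r)).toReal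
  have hA : 0 ≤ A := by positivity
  have hB : 0 ≤ B := by positivity
  refine ⟨A * (1 + (2 * ‖x₀‖ + 2 * r + 1)) ^ ((n : ℝ) + γ) + B + 1, by positivity,
    fun x t ht => ?_⟩
  have hnear := abs_integral_mul_le_of_kernel_bound (rho_nonneg V) ht hγ0 hC.le
    (hQγ t x · ht) hgbound
  have hfar := abs_integral_mul_le_of_kernel_bound_of_far (rho_nonneg V) hρM ht hγ0.le hC.le
    (hQγ t x · ht) hgsupp hgbound
  refine (le_mul_one_add_rpow_neg_of_le_of_far (by positivity) (norm_nonneg x) (by positivity)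
    hA hB hnear hfar).trans (mul_le_mul_of_nonneg_right (by linarith) (by positivity))
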